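/- Let C^i ∈ H¹(Y_f), i = 1,2,3, be Y-periodic weak solutions of ∇_y·(e^i + ∇_y C^i) = 0 in Y_f with Neumann condition (e^i + ∇_y C^i)·N = 0 on γ. Define the matrix B^{(c)} with entries B^{(c)}_{ij} = ∫_{Y_f} (e^i + ∇_y C^i)·(e^j + ∇_y C^j) dy. Then B^{(c)} is symmetric and strictly positive definite. -/

import Mathlib

open MeasureTheory Real

noncomputable section

def normSq (v : Fin 3 → ℝ) : ℝ := ∑ i, (v i) ^ 2

/-- Standard basis vector e^i of ℝ³. -/
def stdBasis (i : Fin 3) : Fin 3 → ℝ := fun k => if k = i then 1 else 0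

/-- Gradient (as a vector) of a scalar function on ℝ³. -/
def grad (u : (Fin 3 → ℝ) → ℝ) (y : Fin 3 → ℝ) : Fin 3 → ℝ :=
  fun i => fderiv ℝ u y (Pi.single i 1)

def Yf (r : ℝ) : Set (Fin 3 → ℝ) :=
  {y | (∀ i, -(1 / 2 : ℝ) < y i ∧ y i < 1 / 2) ∧ r ^ 2 < normSq y}

def YPeriodicS (u : (Fin 3 → ℝ) → ℝ) : Prop :=
  ∀ y : Fin 3 → ℝ, ∀ k : Fin 3 → ℤ, u (fun i => y i + (k i : ℝ)) = u y

/-- Entries of the homogenized diffusion matrix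
B^{(c)}_{ij} = ∫_{Y_f} (e^i + ∇_y C^i)·(e^j + ∇_y C^j) dy. -/
def Bc (r : ℝ) (C : Fin 3 → (Fin 3 → ℝ) → ℝ) (i j : Fin 3) : ℝ :=
  ∫ y in Yf r, ∑ k, (stdBasis i k + grad (C i) y k) * (stdBasis j k + grad (C j) y k)

/-!
Each entry of `B^{(c)}` is an integral of a dot product, so the matrix is a Gram matrix and its
quadratic form at `ξ` is `∫_{Y_f} |ξ + ∇u|²` with `u = ∑ ξ_i C^i`. If this vanished, the continuous
integrand would vanish on the open set `Y_f`, i.e. `∇u = -ξ` there. Along each coordinate segment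
`t ↦ (9/20, …, t, …, 9/20)`, `t ∈ (-1/2, 1/2)`, which lies in `Y_f`, the function `u` would then
have slope `-ξ_k`, while periodicity makes its values at the two ends equal; so `ξ = 0`.
-/

open Finset Function

lemma sum_sum_mul_eq_sum_sq {ι κ : Type*} [Fintype ι] [Fintype κ] (a : ι → κ → ℝ)
    (ξ : ι → ℝ) :
    ∑ i, ∑ j, (∑ k, a i k * a j k) * ξ i * ξ j = ∑ k, (∑ i, ξ i * a i k) ^ 2 := by
  simp only [sq, sum_mul_sum]
  simp only [sum_mul]
  conv_lhs => enter [2, i]; rw [sum_comm]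
  rw [sum_comm]
  exact sum_congr rfl fun _ _ => sum_congr rfl fun _ _ => sum_congr rfl fun _ _ => by ring

lemma sum_sum_integral_mul_eq_integral_sum_sq {α ι κ : Type*} [MeasurableSpace α] [Fintype ι]
    [Fintype κ] {μ : Measure α} (v : ι → α → κ → ℝ)
    (hv : ∀ i j, Integrable (fun y => ∑ k, v i y k * v j y k) μ) (ξ : ι → ℝ) :
    ∑ i, ∑ j, (∫ y, ∑ k, v i y k * v j y k ∂μ) * ξ i * ξ j =
      ∫ y, ∑ k, (∑ i, ξ i * v i y k) ^ 2 ∂μ := by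
  simp_rw [← sum_sum_mul_eq_sum_sq]
  rw [integral_finsetSum _ fun i _ => integrable_finsetSum _ fun j _ =>
    ((hv i j).mul_const _).mul_const _]
  refine sum_congr rfl fun i _ => ?_
  rw [integral_finsetSum _ fun j _ => ((hv i j).mul_const _).mul_const _]
  simp only [integral_mul_const]

lemma Continuous.setIntegral_pos_of_isOpen {X : Type*} [TopologicalSpace X] [MeasurableSpace X]
    [OpensMeasurableSpace X] {μ : Measure X} [μ.IsOpenPosMeasure] {s : Set X} {f : X → ℝ}
    (hf : Continuous f) (hs : IsOpen s) (hfi : IntegrableOn f s μ) (hf0 : ∀ x ∈ s, 0 ≤ f x)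
    {x : X} (hx : x ∈ s) (hfx : f x ≠ 0) : 0 < ∫ x in s, f x ∂μ := by
  rw [setIntegral_pos_iff_support_of_nonneg_ae (ae_restrict_of_forall_mem hs.measurableSet hf0)
    hfi]
  exact (hf.isOpen_support.inter hs).measure_pos μ ⟨x, hfx, hx⟩

lemma normSq_nonneg (v : Fin 3 → ℝ) : 0 ≤ normSq v :=
  sum_nonneg fun i _ => sq_nonneg (v i)

lemma normSq_eq_zero_iff {v : Fin 3 → ℝ} : normSq v = 0 ↔ v = 0 := by
  simp [normSq, sum_eq_zero_iff_of_nonneg, funext_iff, sq_nonneg]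

lemma continuous_normSq : Continuous normSq :=
  continuous_finsetSum _ fun i _ => (continuous_apply i).pow 2

lemma isOpen_Yf (r : ℝ) : IsOpen (Yf r) := by
  simp only [Yf, Set.ofPred_and, Set.ofPred_forall]
  refine .inter (isOpen_iInter_of_finite fun i => ?_) (isOpen_lt continuous_const continuous_normSq)
  exact (isOpen_lt continuous_const (continuous_apply i)).inter
    (isOpen_lt (continuous_apply i) continuous_const)

lemma Yf_subset_Icc (r : ℝ) : Yf r ⊆ Set.Icc (fun _ => -(1 / 2)) (fun _ => 1 / 2) :=
  fun _ hy => ⟨fun i => (hy.1 i).1.le, fun i => (hy.1 i).2.le⟩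

lemma Continuous.integrableOn_Yf {f : (Fin 3 → ℝ) → ℝ} (hf : Continuous f) (r : ℝ) :
    IntegrableOn f (Yf r) :=
  (hf.continuousOn.integrableOn_compact isCompact_Icc).mono_set (Yf_subset_Icc r)

-- The two coordinates equal to `9/20` already give `normSq ≥ 2 (9/20)² > 1/4 > r²`.
lemma update_mem_Yf {r : ℝ} (hr : 0 < r) (hr' : r < 1 / 2) (k : Fin 3) {t : ℝ}
    (ht : t ∈ Set.Ioo (-(1 / 2)) (1 / 2)) : update (fun _ => (9 / 20 : ℝ)) k t ∈ Yf r := by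
  refine ⟨fun i => ?_, ?_⟩
  · rcases eq_or_ne i k with rfl | hik
    · simpa using ht
    · simp only [update_of_ne hik]; norm_num
  · fin_cases k <;> simp [normSq, Fin.sum_univ_three, update_apply] <;> nlinarith [sq_nonneg t]

lemma YPeriodicS.update_add_one {u : (Fin 3 → ℝ) → ℝ} (hu : YPeriodicS u) (x : Fin 3 → ℝ)
    (k : Fin 3) (t : ℝ) : u (update x k (t + 1)) = u (update x k t) := by
  rw [← hu (update x k t) (Pi.single k 1)]
  congr 1
  funext i
  rcases eq_or_ne i k with rfl | hik
  · simp
  · simp [hik]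

lemma continuous_grad {u : (Fin 3 → ℝ) → ℝ} (hu : ContDiff ℝ 1 u) : Continuous (grad u) :=
  continuous_pi fun _ => (hu.continuous_fderiv one_ne_zero).clm_apply continuous_const

lemma grad_sum_mul {ι : Type*} [Fintype ι] {C : ι → (Fin 3 → ℝ) → ℝ}
    (hC : ∀ i, Differentiable ℝ (C i)) (ξ : ι → ℝ) (y : Fin 3 → ℝ) :
    grad (fun y => ∑ i, ξ i * C i y) y = ∑ i, ξ i • grad (C i) y := by
  ext k
  simp [grad, fderiv_fun_sum fun i _ => ((hC i) y).const_mul (ξ i), fderiv_const_mul ((hC _) y)]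

lemma eq_zero_of_grad_eq_const {r : ℝ} (hr : 0 < r) (hr' : r < 1 / 2) {u : (Fin 3 → ℝ) → ℝ}
    (hu : Differentiable ℝ u) (hper : YPeriodicS u) {v : Fin 3 → ℝ}
    (hgrad : ∀ y ∈ Yf r, grad u y = v) : v = 0 := by
  funext k
  set p := update (fun _ : Fin 3 => (9 / 20 : ℝ)) k
  have hslope : ∀ t ∈ Set.Ioo (-(1 / 2) : ℝ) (1 / 2), HasDerivAt (u ∘ p) (v k) t := fun t ht => by
    rw [← hgrad _ (update_mem_Yf hr hr' k ht)]
    exact (hu (p t)).hasFDerivAt.comp_hasDerivAt t (hasDerivAt_update _ k t)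
  have hends : (u ∘ p) (-(1 / 2)) = (u ∘ p) (1 / 2) := by
    have := hper.update_add_one (fun _ => 9 / 20) k (-(1 / 2))
    norm_num at this
    exact this.symm
  obtain ⟨_, _, hzero⟩ := exists_hasDerivAt_eq_zero (by norm_num)
    (hu.continuous.comp (continuous_const.update k continuous_id)).continuousOn hends hslope
  exact hzero

lemma sum_Bc_mul_eq_integral_normSq {r : ℝ} {C : Fin 3 → (Fin 3 → ℝ) → ℝ}
    (hreg : ∀ i, ContDiff ℝ 1 (C i)) (ξ : Fin 3 → ℝ) :
    ∑ i, ∑ j, Bc r C i j * ξ i * ξ j =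
      ∫ y in Yf r, normSq (ξ + grad (fun y => ∑ i, ξ i * C i y) y) := by
  have hcont : ∀ i k, Continuous fun y => stdBasis i k + grad (C i) y k := fun i k =>
    continuous_const.add ((continuous_apply k).comp (continuous_grad (hreg i)))
  unfold Bc
  rw [sum_sum_integral_mul_eq_integral_sum_sq (fun i y k => stdBasis i k + grad (C i) y k)]
  · congr 1
    ext y
    unfold normSq
    congr 1
    ext k
    rw [grad_sum_mul (fun i => (hreg i).differentiable one_ne_zero)]
    simp [stdBasis, mul_add, sum_add_distrib]
  · intro i j
    exact (continuous_finsetSum _ fun k _ => (hcont i k).mul (hcont j k)).integrableOn_Yf r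

lemma Bc_comm (r : ℝ) (C : Fin 3 → (Fin 3 → ℝ) → ℝ) (i j : Fin 3) :
    Bc r C i j = Bc r C j i := by
  simp only [Bc, mul_comm]

theorem stmt_7_general (r : ℝ) (hr : 0 < r) (hr' : r < 1 / 2)
    (C : Fin 3 → (Fin 3 → ℝ) → ℝ)
    (hreg : ∀ i, ContDiff ℝ 1 (C i)) (hper : ∀ i, YPeriodicS (C i)) :
    (∀ i j, Bc r C i j = Bc r C j i) ∧
    (∀ ξ : Fin 3 → ℝ, ξ ≠ 0 → 0 < ∑ i, ∑ j, Bc r C i j * ξ i * ξ j) := by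
  refine ⟨Bc_comm r C, fun ξ hξ => ?_⟩
  set u : (Fin 3 → ℝ) → ℝ := fun y => ∑ i, ξ i * C i y
  have hu : ContDiff ℝ 1 u := ContDiff.sum fun i _ => contDiff_const.mul (hreg i)
  have hu_per : YPeriodicS u := fun y k => by simp only [u, hper _ y k]
  obtain ⟨y, hy, hgrad⟩ : ∃ y ∈ Yf r, grad u y ≠ -ξ := by
    by_contra! h
    exact hξ <| neg_eq_zero.1 <|
      eq_zero_of_grad_eq_const hr hr' (hu.differentiable one_ne_zero) hu_per h
  rw [sum_Bc_mul_eq_integral_normSq hreg]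
  have hcont : Continuous fun y => normSq (ξ + grad u y) :=
    continuous_normSq.comp (continuous_const.add (continuous_grad hu))
  refine hcont.setIntegral_pos_of_isOpen (isOpen_Yf r) (hcont.integrableOn_Yf r)
    (fun y _ => normSq_nonneg _) hy ?_
  rwa [Ne, normSq_eq_zero_iff, add_eq_zero_iff_eq_neg']

/-- The homogenized diffusion matrix B^{(c)}, built from the Y-periodic weak solutions C^i of
∇·(e^i + ∇C^i) = 0 in Y_f with (e^i + ∇C^i)·N = 0 on γ (weak form: ∫ (e^i+∇C^i)·∇φ = 0 for
all Y-periodic test φ), is symmetric and strictly positive definite. -/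
theorem stmt_7 (r : ℝ) (hr : 0 < r) (hr' : r < 1 / 2)
    (C : Fin 3 → (Fin 3 → ℝ) → ℝ)
    (hreg : ∀ i, ContDiff ℝ 1 (C i)) (hper : ∀ i, YPeriodicS (C i))
    (hweak : ∀ i, ∀ φ : (Fin 3 → ℝ) → ℝ, ContDiff ℝ 1 φ → YPeriodicS φ →
      ∫ y in Yf r, ∑ k, (stdBasis i k + grad (C i) y k) * grad φ y k = 0) :
    (∀ i j, Bc r C i j = Bc r C j i) ∧
    (∀ ξ : Fin 3 → ℝ, ξ ≠ 0 → 0 < ∑ i, ∑ j, Bc r C i j * ξ i * ξ j) :=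
  stmt_7_general r hr hr' C hreg hper

end
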